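/- The operator L_{−1} := Σ_{α=1}^{n} Σ_{p≥1} T^{α,p}∘∂_{α,p−1} + (1/2)·Σ_{α,β=1}^{n} η_{αβ}·T^{α,0}∘T^{β,0} equals V_{−1} as a linear operator on P. (This is the case j = −1 of the coincidence of the Virasoro operators of the Frobenius manifold of the Coxeter group D_n, expressed in the rescaled time variables, with the operators V_j obtained from vertex operators of the two-component BKP hierarchy.) -/

import Mathlib

open MvPolynomial

noncomputable section

/-- The polynomial algebra over ℚ in variables `t_{2m+1}` (index `(false, m)`) and
`t̂_{2m+1}` (index `(true, m)`). -/
abbrev PP : Type := MvPolynomial (Bool × ℕ) ℚ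

/-- The operator `p_k` (for `b = false`) resp. `p̂_k` (for `b = true`):
`2·∂/∂t_k` for odd positive `k`, multiplication by `(-k)·t_{-k}` for odd negative `k`,
and `0` for even `k`. -/
def pOp (b : Bool) (k : ℤ) : PP → PP := fun q =>
  if 0 < k ∧ Odd k then (2 : ℚ) • pderiv (b, (k.toNat - 1) / 2) q
  else if k < 0 ∧ Odd k then ((-k : ℤ) : ℚ) • (X (b, ((-k).toNat - 1) / 2) * q)
  else 0

/-- The normal-ordered product `:p_a p_c:`, equal to `p_c ∘ p_a` if `a > 0 > c`
and `p_a ∘ p_c` otherwise. -/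
def nord (b : Bool) (a c : ℤ) : PP → PP :=
  if 0 < a ∧ c < 0 then fun q => pOp b c (pOp b a q) else fun q => pOp b a (pOp b c q)

/-- The Virasoro operator
`V_j = (1/(8n-8))·Σ_{i∈ℤ} :p_i p_{(2n-2)j-i}: + (1/8)·Σ_{i∈ℤ} :p̂_i p̂_{2j-i}:
+ δ_{j,0}·(n/24)·(1 + 1/(2n-2))·Id`, acting pointwise (on each polynomial only finitely
many summands act nontrivially). -/
def Vop (n : ℕ) (j : ℤ) : PP → PP := fun q =>
  (8 * (n : ℚ) - 8)⁻¹ • (∑ᶠ i : ℤ, nord false i ((2 * (n : ℤ) - 2) * j - i) q)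
  + (8 : ℚ)⁻¹ • (∑ᶠ i : ℤ, nord true i (2 * j - i) q)
  + (if j = 0 then (n : ℚ) / 24 * (1 + (2 * (n : ℚ) - 2)⁻¹) else 0) • q

/-- For `α ∈ {1,…,n}`, the spectrum `μ_α = (2α-n)/(2n-2)` for `α ≤ n-1` and `μ_n = 0`. -/
def mu (n α : ℕ) : ℚ :=
  if α = n then 0 else (2 * (α : ℚ) - n) / (2 * (n : ℚ) - 2)

/-- The rescaling constants: `c_{α,p} = (2n-2)·∏_{r=0}^{p}((2α-1)/(2n-2)+r)` for
`α ≤ n-1` and `c_{n,p} = 2·∏_{r=0}^{p}(1/2+r)`. -/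
def cc (n α p : ℕ) : ℚ :=
  if α = n then 2 * ∏ r ∈ Finset.range (p + 1), ((1 : ℚ) / 2 + r)
  else (2 * (n : ℚ) - 2) * ∏ r ∈ Finset.range (p + 1), ((2 * (α : ℚ) - 1) / (2 * (n : ℚ) - 2) + r)

/-- The variable corresponding to the time `T^{α,p}`: the variable `t_{(2n-2)p+2α-1}`
(index `(false, (n-1)p+α-1)`) if `α ≤ n-1`, and `t̂_{2p+1}` (index `(true, p)`) if `α = n`. -/
def vIdx (n α p : ℕ) : Bool × ℕ :=
  if α = n then (true, p) else (false, (n - 1) * p + α - 1)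

/-- The operator `T^{α,p}`: multiplication by the rescaled time variable `c_{α,p}·t`. -/
def Tmul (n α p : ℕ) : PP → PP := fun q => cc n α p • (X (vIdx n α p) * q)

/-- The operator `∂_{α,p} = c_{α,p}⁻¹·∂/∂t`, the derivative in the rescaled time variable. -/
def Dop (n α p : ℕ) : PP → PP := fun q => (cc n α p)⁻¹ • pderiv (vIdx n α p) q

/-- The flat metric: `η_{αβ} = 1/(4n-4)` if `α+β = n`, `η_{nn} = 1/4`, and `0` otherwise. -/
def eta (n α β : ℕ) : ℚ :=
  if α + β = n then (4 * (n : ℚ) - 4)⁻¹ else if α = n ∧ β = n then (4 : ℚ)⁻¹ else 0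

/-- The inverse metric: `η^{αβ} = 4n-4` if `α+β = n`, `η^{nn} = 4`, and `0` otherwise. -/
def etaInv (n α β : ℕ) : ℚ :=
  if α + β = n then 4 * (n : ℚ) - 4 else if α = n ∧ β = n then 4 else 0

/-!
On the `t`-variables and on the `t̂`-variables separately, with `d = n - 1` resp. `d = 1`, both
sides equal `(8d)⁻¹·(4·E_d + Q_d)`, where `E_d = Σ_m (2m+2d+1)·t_{2m+2d+1}·∂/∂t_{2m+1}` and `Q_d`
is multiplication by `Σ_{a+c=d-1} (2a+1)(2c+1)·t_{2a+1}·t_{2c+1}`.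

In `V_{-1}` only odd `i` contribute to `Σ_i :p_i p_{-2d-i}:`. For `i > 0` and for `i < -2d` one
factor is a derivative and the other a multiplication, and each of these two ranges yields `2·E_d`;
the `d` odd `i` with `-2d < i < 0` yield `Q_d`.

In `L_{-1}`, if `T^{α,p}` is the time `t_{2m+1}` then `T^{α,p+1}` is `t_{2m+2d+1}` and
`c_{α,p+1}/c_{α,p} = (2m+2d+1)/(2d)`; as `(α, p)` runs over `α < n`, `m = (n-1)p + α - 1` runs over
all of `ℕ` exactly once. The metric pairs `T^{α,0} = (2α-1)·t_{2α-1}` with `T^{n-α,0}`, giving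
`Q_{n-1}`, and `T^{n,0} = t̂_1` with itself, giving `Q_1`.
-/

open Function Finset

section Reindexing

variable {M : Type*} [AddCommMonoid M]

theorem sum_Icc_one_eq_sum_range_add (f : ℕ → M) {n : ℕ} (hn : 1 ≤ n) :
    ∑ α ∈ Icc 1 n, f α = ∑ r ∈ range (n - 1), f (r + 1) + f n := by
  rw [← Ico_add_one_right_eq_Icc, sum_Ico_succ_top hn, sum_Ico_eq_sum_range]
  simp only [add_comm 1]

theorem finite_support_of_finite_support_comp_add {h : ℕ → M} (d : ℕ)
    (hh : (support fun m => h (m + d)).Finite) : (support h).Finite := by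
  refine ((Set.finite_Iio d).union (hh.image (· + d))).subset fun m hm => ?_
  rcases lt_or_ge m d with hmd | hmd
  · exact Or.inl hmd
  · exact Or.inr ⟨m - d, by simpa [Nat.sub_add_cancel hmd] using hm, Nat.sub_add_cancel hmd⟩

theorem finsum_nat_eq_sum_range_add_finsum {h : ℕ → M} (d : ℕ)
    (hh : (support fun m => h (m + d)).Finite) :
    ∑ᶠ m, h m = ∑ m ∈ range d, h m + ∑ᶠ m, h (m + d) := by
  have hcover : Set.Iio d ∪ Set.range (· + d) = Set.univ := by
    ext m
    simp only [Set.mem_union, Set.mem_Iio, Set.mem_range, Set.mem_univ, iff_true]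
    exact (lt_or_ge m d).imp_right fun hmd => ⟨m - d, Nat.sub_add_cancel hmd⟩
  have hdisj : Disjoint (Set.Iio d) (Set.range (· + d)) := by
    rw [Set.disjoint_left]
    rintro _ hm ⟨k, rfl⟩
    exact absurd hm (by simp)
  have htail : (Set.range (· + d) ∩ support h).Finite :=
    (hh.image (· + d)).subset (by rintro _ ⟨⟨k, rfl⟩, hk⟩; exact ⟨k, hk, rfl⟩)
  rw [← finsum_mem_univ, ← hcover, finsum_mem_union' hdisj ((Set.finite_Iio d).inter_of_left _)
    htail, ← coe_range, finsum_mem_coe_finset, finsum_mem_range (add_left_injective d)]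

theorem finsum_int_eq_finsum_odd_add_finsum_odd_neg {g : ℤ → M}
    (heven : ∀ i, Even i → g i = 0) (hpos : (support fun m : ℕ => g (2 * m + 1)).Finite)
    (hneg : (support fun m : ℕ => g (-(2 * m + 1))).Finite) :
    ∑ᶠ i, g i = ∑ᶠ m : ℕ, g (2 * m + 1) + ∑ᶠ m : ℕ, g (-(2 * m + 1)) := by
  set pos : ℕ → ℤ := fun m => 2 * m + 1
  set neg : ℕ → ℤ := fun m => -(2 * m + 1)
  have hsupp : ∀ i ∈ support g, i ∈ Set.univ ↔ i ∈ Set.range pos ∪ Set.range neg := by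
    intro i hi
    obtain ⟨k, rfl⟩ := Int.not_even_iff_odd.mp fun he => hi (heven i he)
    simp only [Set.mem_univ, Set.mem_union, Set.mem_range, true_iff, pos, neg]
    rcases le_or_gt 0 k with hk | hk
    · exact Or.inl ⟨k.toNat, by omega⟩
    · exact Or.inr ⟨(-k - 1).toNat, by omega⟩
  have hdisj : Disjoint (Set.range pos) (Set.range neg) := by
    rw [Set.disjoint_left]
    rintro _ ⟨m, rfl⟩ ⟨m', h⟩
    simp only [pos, neg] at h
    omega
  rw [← finsum_mem_univ, finsum_mem_inter_support_eq' g _ _ hsupp,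
    finsum_mem_union' hdisj
      ((hpos.image pos).subset (by rintro _ ⟨⟨k, rfl⟩, hk⟩; exact ⟨k, hk, rfl⟩))
      ((hneg.image neg).subset (by rintro _ ⟨⟨k, rfl⟩, hk⟩; exact ⟨k, hk, rfl⟩)),
    finsum_mem_range (fun a b h => by simp only [pos] at h; omega),
    finsum_mem_range (fun a b h => by simp only [neg] at h; omega)]

theorem sum_range_finsum_mul_add {h : ℕ → M} (hh : (support h).Finite) {d : ℕ} (hd : 0 < d) :
    ∑ r ∈ range d, ∑ᶠ p, h (d * p + r) = ∑ᶠ m, h m := by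
  have : NeZero d := ⟨hd.ne'⟩
  let e : Fin d × ℕ ≃ ℕ := (Equiv.prodComm _ _).trans (Nat.divModEquiv d).symm
  have he : (support (h ∘ e)).Finite := by
    rw [support_comp_eq_preimage]
    exact hh.preimage e.injective.injOn
  rw [← finsum_comp_equiv e, ← Function.comp_def h e, finsum_curry _ he, finsum_eq_sum_of_fintype,
    ← Fin.sum_univ_eq_sum_range]
  refine sum_congr rfl fun r _ => finsum_congr fun p => ?_
  simp [e, mul_comm]

end Reindexing

theorem pOp_smul (b : Bool) (k : ℤ) (r : ℚ) (x : PP) : pOp b k (r • x) = r • pOp b k x := by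
  unfold pOp
  split_ifs <;> simp [smul_comm r]

theorem pOp_zero (b : Bool) (k : ℤ) : pOp b k 0 = 0 := by
  simpa using pOp_smul b k 0 0

theorem pOp_of_even (b : Bool) {k : ℤ} (hk : Even k) (x : PP) : pOp b k x = 0 := by
  have := Int.not_odd_iff_even.mpr hk
  simp [pOp, this]

theorem pOp_odd_pos (b : Bool) (m : ℕ) (x : PP) :
    pOp b (2 * m + 1) x = (2 : ℚ) • pderiv (b, m) x := by
  rw [pOp, if_pos ⟨by omega, ⟨m, rfl⟩⟩, show ((2 * (m : ℤ) + 1).toNat - 1) / 2 = m by omega]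

theorem pOp_odd_neg (b : Bool) (m : ℕ) (x : PP) :
    pOp b (-(2 * m + 1)) x = (2 * m + 1 : ℚ) • (X (b, m) * x) := by
  rw [pOp, if_neg (by omega), if_pos ⟨by omega, ⟨-m - 1, by ring⟩⟩,
    show ((-(-(2 * (m : ℤ) + 1))).toNat - 1) / 2 = m by omega]
  push_cast
  ring_nf

def eulerShiftTerm (b : Bool) (d m : ℕ) (q : PP) : PP :=
  (2 * ((m + d : ℕ) : ℚ) + 1) • (X (b, m + d) * pderiv (b, m) q)

/-- `E_d q = Σ_m (2m+2d+1)·t_{2m+2d+1}·∂q/∂t_{2m+1}`, in the hatted variables if `b`. -/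
def eulerShift (b : Bool) (d : ℕ) (q : PP) : PP :=
  ∑ᶠ m, eulerShiftTerm b d m q

/-- `Q_d q = Σ_{a+c=d-1} (2a+1)(2c+1)·t_{2a+1}·t_{2c+1}·q`, in the hatted variables if `b`. -/
def quadraticPart (b : Bool) (d : ℕ) (q : PP) : PP :=
  ∑ a ∈ range d, ((2 * a + 1 : ℚ) * (2 * ((d - 1 - a : ℕ) : ℚ) + 1)) •
    (X (b, a) * (X (b, d - 1 - a) * q))

theorem finite_support_pderiv {σ R : Type*} [CommSemiring R] (q : MvPolynomial σ R) :
    (support fun i => pderiv i q).Finite :=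
  q.vars.finite_toSet.subset fun _ hi => by_contra fun h => hi (pderiv_eq_zero_of_notMem_vars h)

theorem finite_support_eulerShiftTerm (b : Bool) (d : ℕ) (q : PP) :
    (support fun m => eulerShiftTerm b d m q).Finite :=
  ((finite_support_pderiv q).preimage (Prod.mk_right_injective b).injOn).subset fun m hm h0 =>
    hm (by simp [eulerShiftTerm, show pderiv (b, m) q = 0 from h0])

theorem finite_support_smul_eulerShiftTerm (c : ℚ) (b : Bool) (d : ℕ) (q : PP) :
    (support fun m => c • eulerShiftTerm b d m q).Finite :=
  (finite_support_eulerShiftTerm b d q).subset (support_const_smul_subset c _)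

theorem nord_odd_pos (b : Bool) (d m : ℕ) (q : PP) :
    nord b (2 * m + 1) (-(2 * d) - (2 * m + 1)) q = (2 : ℚ) • eulerShiftTerm b d m q := by
  rw [nord, if_pos ⟨by omega, by omega⟩,
    show -(2 * (d : ℤ)) - (2 * m + 1) = -(2 * ((m + d : ℕ) : ℤ) + 1) by push_cast; ring,
    pOp_odd_pos, pOp_smul, pOp_odd_neg, eulerShiftTerm, smul_comm]

theorem nord_odd_neg_add (b : Bool) (d m : ℕ) (q : PP) :
    nord b (-(2 * ((m + d : ℕ) : ℤ) + 1)) (-(2 * d) - -(2 * ((m + d : ℕ) : ℤ) + 1)) q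
      = (2 : ℚ) • eulerShiftTerm b d m q := by
  rw [nord, if_neg (by omega),
    show -(2 * (d : ℤ)) - -(2 * ((m + d : ℕ) : ℤ) + 1) = 2 * m + 1 by push_cast; ring,
    pOp_odd_pos, pOp_smul, pOp_odd_neg, eulerShiftTerm, smul_comm]

theorem nord_odd_neg_of_lt (b : Bool) {d a : ℕ} (ha : a < d) (q : PP) :
    nord b (-(2 * a + 1)) (-(2 * d) - -(2 * a + 1)) q
      = ((2 * a + 1 : ℚ) * (2 * ((d - 1 - a : ℕ) : ℚ) + 1)) •
          (X (b, a) * (X (b, d - 1 - a) * q)) := by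
  rw [nord, if_neg (by omega),
    show -(2 * (d : ℤ)) - -(2 * a + 1) = -(2 * ((d - 1 - a : ℕ) : ℤ) + 1) by omega,
    pOp_odd_neg, pOp_odd_neg, mul_smul_comm, smul_smul]

theorem nord_of_even (b : Bool) {i : ℤ} (hi : Even i) (c : ℤ) (q : PP) : nord b i c q = 0 := by
  unfold nord
  split_ifs <;> dsimp only
  · rw [pOp_of_even b hi, pOp_zero]
  · exact pOp_of_even b hi _

theorem finsum_nord (b : Bool) (d : ℕ) (q : PP) :
    ∑ᶠ i : ℤ, nord b i (-(2 * d) - i) q = (4 : ℚ) • eulerShift b d q + quadraticPart b d q := by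
  have hfin := finite_support_smul_eulerShiftTerm 2 b d q
  have hpos := funext fun m => nord_odd_pos b d m q
  have htail := funext fun m => nord_odd_neg_add b d m q
  rw [finsum_int_eq_finsum_odd_add_finsum_odd_neg (fun i hi => nord_of_even b hi _ q)
      (hpos ▸ hfin) (finite_support_of_finite_support_comp_add d (htail ▸ hfin)), hpos,
    finsum_nat_eq_sum_range_add_finsum
      (h := fun m : ℕ => nord b (-(2 * m + 1)) (-(2 * d) - -(2 * m + 1)) q) d (htail ▸ hfin), htail,
    sum_congr rfl fun a ha => nord_odd_neg_of_lt b (mem_range.mp ha) q,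
    ← smul_finsum' _ (finite_support_eulerShiftTerm b d q), ← quadraticPart, ← eulerShift]
  module

section

variable {n : ℕ}

theorem cc_pos {α : ℕ} (h1 : 1 ≤ α) (h2 : α ≤ n) (p : ℕ) : 0 < cc n α p := by
  unfold cc
  split_ifs with hα
  · positivity
  · have hn : (0 : ℚ) < 2 * n - 2 := by
      have : (2 : ℚ) ≤ n := by exact_mod_cast (show 2 ≤ n by omega)
      linarith
    have hα' : (0 : ℚ) < 2 * α - 1 := by
      have : (1 : ℚ) ≤ α := by exact_mod_cast h1
      linarith
    exact mul_pos hn (prod_pos fun r _ => by positivity)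

theorem cc_succ_of_ne {α : ℕ} (h : α ≠ n) (p : ℕ) :
    cc n α (p + 1) = cc n α p * ((2 * α - 1) / (2 * n - 2) + (p + 1)) := by
  rw [cc, cc, if_neg h, if_neg h, prod_range_succ, mul_assoc]
  push_cast
  ring

theorem cc_self_succ (p : ℕ) : cc n n (p + 1) = cc n n p * (1 / 2 + (p + 1)) := by
  rw [cc, cc, if_pos rfl, if_pos rfl, prod_range_succ, mul_assoc]
  push_cast
  ring

theorem Tmul_succ_Dop (α p : ℕ) (q : PP) :
    Tmul n α (p + 1) (Dop n α p q)
      = (cc n α (p + 1) / cc n α p) • (X (vIdx n α (p + 1)) * pderiv (vIdx n α p) q) := by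
  rw [Tmul, Dop, mul_smul_comm, smul_smul, div_eq_mul_inv]

theorem Tmul_succ_Dop_of_lt {r : ℕ} (hr : r + 1 < n) (p : ℕ) (q : PP) :
    Tmul n (r + 1) (p + 1) (Dop n (r + 1) p q)
      = (2 * ((n - 1 : ℕ) : ℚ))⁻¹ • eulerShiftTerm false (n - 1) ((n - 1) * p + r) q := by
  have hidx : (n - 1) * (p + 1) + (r + 1) - 1 = (n - 1) * p + r + (n - 1) := by
    rw [mul_add_one]; omega
  have hcast : ((n - 1 : ℕ) : ℚ) = n - 1 := by rw [Nat.cast_sub (by omega), Nat.cast_one]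
  have hn : (n : ℚ) - 1 ≠ 0 := by rw [← hcast]; norm_cast; omega
  rw [Tmul_succ_Dop, cc_succ_of_ne hr.ne, mul_div_cancel_left₀ _ (cc_pos (by omega) hr.le p).ne',
    eulerShiftTerm, smul_smul]
  simp only [vIdx, if_neg hr.ne, hidx]
  congr 1
  push_cast [hcast]
  field_simp
  ring

theorem Tmul_succ_Dop_self (p : ℕ) (q : PP) :
    Tmul n n (p + 1) (Dop n n p q) = (2 : ℚ)⁻¹ • eulerShiftTerm true 1 p q := by
  rw [Tmul_succ_Dop, cc_self_succ, mul_div_cancel_left₀ _ (by simp [cc]; positivity),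
    eulerShiftTerm, smul_smul]
  simp only [vIdx]
  congr 1
  push_cast
  ring

theorem finsum_Tmul_succ_Dop_self (q : PP) :
    ∑ᶠ p, Tmul n n (p + 1) (Dop n n p q) = (2 : ℚ)⁻¹ • eulerShift true 1 q := by
  rw [eulerShift, smul_finsum' _ (finite_support_eulerShiftTerm true 1 q)]
  exact finsum_congr (Tmul_succ_Dop_self · q)

theorem sum_finsum_Tmul_succ_Dop_of_lt (hn : 2 ≤ n) (q : PP) :
    ∑ r ∈ range (n - 1), ∑ᶠ p, Tmul n (r + 1) (p + 1) (Dop n (r + 1) p q)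
      = (2 * ((n - 1 : ℕ) : ℚ))⁻¹ • eulerShift false (n - 1) q := by
  rw [eulerShift, smul_finsum' _ (finite_support_eulerShiftTerm false (n - 1) q),
    ← sum_range_finsum_mul_add (finite_support_smul_eulerShiftTerm _ false (n - 1) q)
      (show 0 < n - 1 by omega)]
  exact sum_congr rfl fun r hr =>
    finsum_congr (Tmul_succ_Dop_of_lt (by have := mem_range.mp hr; omega) · q)

theorem Tmul_zero_of_lt {α : ℕ} (h1 : 1 ≤ α) (h2 : α < n) (x : PP) :
    Tmul n α 0 x = (2 * ((α - 1 : ℕ) : ℚ) + 1) • (X (false, α - 1) * x) := by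
  have hn : (2 * n - 2 : ℚ) ≠ 0 := by
    have : (2 : ℚ) ≤ n := by exact_mod_cast (show 2 ≤ n by omega)
    linarith
  rw [Tmul, vIdx, if_neg h2.ne, mul_zero, zero_add, cc, if_neg h2.ne, prod_range_one,
    Nat.cast_zero, add_zero, mul_div_cancel₀ _ hn, Nat.cast_sub h1, Nat.cast_one]
  ring_nf

theorem Tmul_zero_self (x : PP) : Tmul n n 0 x = X (true, 0) * x := by
  rw [Tmul, vIdx, if_pos rfl, cc, if_pos rfl, prod_range_one]
  norm_num

theorem sum_eta_smul_of_lt {M : Type*} [AddCommMonoid M] [Module ℚ M] {α : ℕ} (h1 : 1 ≤ α)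
    (h2 : α < n) (f : ℕ → M) :
    ∑ β ∈ Icc 1 n, eta n α β • f β = (4 * ((n - 1 : ℕ) : ℚ))⁻¹ • f (n - α) := by
  rw [sum_eq_single_of_mem (n - α) (mem_Icc.mpr ⟨by omega, by omega⟩) fun β _ hβ => by
      rw [eta, if_neg (by omega), if_neg (by omega), zero_smul],
    eta, if_pos (by omega), Nat.cast_sub (by omega)]
  push_cast
  ring_nf

theorem sum_eta_smul_self {M : Type*} [AddCommMonoid M] [Module ℚ M] (hn : 1 ≤ n) (f : ℕ → M) :
    ∑ β ∈ Icc 1 n, eta n n β • f β = (4 : ℚ)⁻¹ • f n := by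
  rw [sum_eq_single_of_mem n (mem_Icc.mpr ⟨hn, le_rfl⟩) fun β hβ hne => by
      rw [eta, if_neg (by simp at hβ; omega), if_neg (by tauto), zero_smul],
    eta, if_neg (by omega), if_pos ⟨rfl, rfl⟩]

theorem sum_sum_eta_smul_Tmul_Tmul (hn : 2 ≤ n) (q : PP) :
    ∑ α ∈ Icc 1 n, ∑ β ∈ Icc 1 n, eta n α β • Tmul n α 0 (Tmul n β 0 q)
      = (4 * ((n - 1 : ℕ) : ℚ))⁻¹ • quadraticPart false (n - 1) q
        + (4 : ℚ)⁻¹ • quadraticPart true 1 q := by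
  rw [sum_Icc_one_eq_sum_range_add _ (by omega), sum_eta_smul_self (by omega), Tmul_zero_self,
    Tmul_zero_self, quadraticPart, quadraticPart, sum_range_one, smul_sum]
  congr 1
  · refine sum_congr rfl fun r hr => ?_
    have hr := mem_range.mp hr
    rw [sum_eta_smul_of_lt (by omega) (by omega), Tmul_zero_of_lt (by omega) (by omega),
      Tmul_zero_of_lt (by omega) (by omega), mul_smul_comm, smul_smul,
      show n - (r + 1) - 1 = n - 1 - 1 - r by omega, Nat.add_sub_cancel]
    simp only [smul_smul, mul_assoc]
  · simp

theorem Vop_neg_one (hn : 1 ≤ n) (q : PP) :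
    Vop n (-1) q
      = (8 * ((n - 1 : ℕ) : ℚ))⁻¹ • ((4 : ℚ) • eulerShift false (n - 1) q
          + quadraticPart false (n - 1) q)
        + (8 : ℚ)⁻¹ • ((4 : ℚ) • eulerShift true 1 q + quadraticPart true 1 q) := by
  have hfalse : ∀ i : ℤ, (2 * (n : ℤ) - 2) * -1 - i = -(2 * ((n - 1 : ℕ) : ℤ)) - i := by
    intro i; push_cast [hn]; ring
  have htrue : ∀ i : ℤ, 2 * -1 - i = -(2 * ((1 : ℕ) : ℤ)) - i := by
    intro i; push_cast; ring
  simp only [Vop, hfalse, htrue, finsum_nord, if_neg (show (-1 : ℤ) ≠ 0 by norm_num), zero_smul,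
    add_zero]
  push_cast [hn]
  ring_nf

end

/-- the Virasoro operator
`L_{-1} = Σ_α Σ_{p≥1} T^{α,p}∘∂_{α,p-1} + (1/2)·Σ_{α,β} η_{αβ}·T^{α,0}∘T^{β,0}`
of the Frobenius manifold of the Coxeter group `D_n` equals `V_{-1}`. -/
theorem L_neg_one_eq_V_neg_one (n : ℕ) (hn : 3 ≤ n) (q : PP) :
    (∑ α ∈ Finset.Icc 1 n, ∑ᶠ p : ℕ, Tmul n α (p + 1) (Dop n α p q))
      + (1 / 2 : ℚ) • ∑ α ∈ Finset.Icc 1 n, ∑ β ∈ Finset.Icc 1 n,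
          eta n α β • Tmul n α 0 (Tmul n β 0 q)
      = Vop n (-1) q := by
  rw [sum_Icc_one_eq_sum_range_add _ (by omega), sum_finsum_Tmul_succ_Dop_of_lt (by omega),
    finsum_Tmul_succ_Dop_self, sum_sum_eta_smul_Tmul_Tmul (by omega), Vop_neg_one (by omega)]
  module

end
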